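/- Let (μ̂, λ̂, x̂) be given with μ̂, λ̂ ∈ ℝ, μ̂ ≠ 0, ‖x̂‖ = 1, and define γ_C = x̂ᴴCx̂ and r = (A − μ̂C − λ̂I)x̂. Then there exist Hermitian matrices δA and δC satisfying δAx̂ − μ̂ δC x̂ = −r and x̂ᴴδCx̂ = −γ_C, with ‖δA‖ ≤ √2 η₁ ‖A‖ and ‖δC‖ ≤ √2 η₁ ‖C‖, where η₁ = max{|x̂ᴴAx̂ − λ̂|/‖A‖, |γ_C|/‖C‖, ‖r‖/(‖A‖ + |μ̂|‖C‖)}. -/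

import Mathlib

open scoped Matrix

/-- Spectral (ℓ²-operator) norm of a square complex matrix. -/
noncomputable def specNorm {n : Type*} [Fintype n] [DecidableEq n]
    (M : Matrix n n ℂ) : ℝ :=
  ‖Matrix.toEuclideanCLM (𝕜 := ℂ) M‖

/-- Euclidean norm of a complex vector. -/
noncomputable def vecNorm {n : Type*} [Fintype n] (x : n → ℂ) : ℝ :=
  ‖(EuclideanSpace.equiv n ℂ).symm x‖

/-- A Hermitian matrix is indefinite: its quadratic form takes both
positive and negative values. -/
def IsIndefinite {n : Type*} [Fintype n] (M : Matrix n n ℂ) : Prop :=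
  (∃ y : n → ℂ, 0 < (star y ⬝ᵥ M.mulVec y).re) ∧
  (∃ z : n → ℂ, (star z ⬝ᵥ M.mulVec z).re < 0)

/-- `(μ, lam, x)` is a 2D-eigentriplet of the pair `(A, C)`:
`(A - μ C) x = lam x`, `xᴴ C x = 0`, `xᴴ x = 1`. -/
def Is2DEigentriplet {n : Type*} [Fintype n] (A C : Matrix n n ℂ)
    (μ lam : ℝ) (x : n → ℂ) : Prop :=
  (A - (μ : ℂ) • C).mulVec x = (lam : ℂ) • x ∧
  star x ⬝ᵥ C.mulVec x = 0 ∧ star x ⬝ᵥ x = 1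

/-!
The defects `α = x̂ᴴAx̂ - λ̂` and `γ = x̂ᴴCx̂` are real and `x̂ᴴr = α - μ̂γ`, so
`r = (α - μ̂γ) x̂ + r⊥` with `r⊥ ⊥ x̂` and `‖r⊥‖ ≤ ‖r‖`. For reals `a, b` and a unit vector
`u ⊥ x̂`, the Hermitian matrix `a (x̂x̂ᴴ - uuᴴ) + b (x̂uᴴ + ux̂ᴴ)` maps `x̂` to `a x̂ + b u` and has
norm at most `√(a² + b²)`. With `D = ‖A‖ + |μ̂|‖C‖` this allows
`δA x̂ = -α x̂ - (‖A‖ / D) r⊥` and `δC x̂ = -γ x̂ + sign(μ̂) (‖C‖ / D) r⊥`, which solve both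
equations; the two components of `δA x̂` are bounded by `η₁‖A‖`, those of `δC x̂` by `η₁‖C‖`,
whence the factor `√2`.
-/

open Matrix WithLp
open scoped InnerProductSpace

section InnerProductSpace

variable {E : Type*} [NormedAddCommGroup E] [InnerProductSpace ℂ E]

lemma norm_sub_inner_smul_le {e : E} (he : ‖e‖ = 1) (y : E) : ‖y - ⟪e, y⟫_ℂ • e‖ ≤ ‖y‖ := by
  have hperp : ⟪y - ⟪e, y⟫_ℂ • e, ⟪e, y⟫_ℂ • e⟫_ℂ = 0 := by
    simp [inner_self_eq_norm_sq_to_K, he]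
  have hpyth := norm_add_sq_eq_norm_sq_add_norm_sq_of_inner_eq_zero _ _ hperp
  rw [sub_add_cancel] at hpyth
  nlinarith [norm_nonneg (y - ⟪e, y⟫_ℂ • e), norm_nonneg y, sq_nonneg ‖⟪e, y⟫_ℂ • e‖]

lemma norm_smul_inner_smul_le {e : E} (he : ‖e‖ = 1) (a : ℝ) (y : E) :
    ‖((a : ℂ) * ⟪e, y⟫_ℂ) • e‖ ≤ |a| * ‖y‖ := by
  rw [norm_smul, he, mul_one, norm_mul, Complex.norm_real, Real.norm_eq_abs]
  gcongr
  simpa [he] using norm_inner_le_norm (𝕜 := ℂ) e y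

lemma norm_sq_add_norm_sq_rotate (a b : ℝ) (p q : ℂ) :
    ‖(a : ℂ) * p + b * q‖ ^ 2 + ‖(b : ℂ) * p - a * q‖ ^ 2
      = (a ^ 2 + b ^ 2) * (‖p‖ ^ 2 + ‖q‖ ^ 2) := by
  simp only [Complex.sq_norm, Complex.normSq_apply, Complex.add_re, Complex.add_im,
    Complex.sub_re, Complex.sub_im, Complex.re_ofReal_mul, Complex.im_ofReal_mul]
  ring

/-- On `span {e, u}` this map is `a • diag(1, -1) + b • swap`, i.e. `√(a² + b²)` times a
reflection; it vanishes on the orthogonal complement. -/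
lemma norm_reflection_le {e u : E} (hortho : Orthonormal ℂ ![e, u]) (a b : ℝ) (y : E) :
    ‖((a : ℂ) * ⟪e, y⟫_ℂ + b * ⟪u, y⟫_ℂ) • e + ((b : ℂ) * ⟪e, y⟫_ℂ - a * ⟪u, y⟫_ℂ) • u‖
      ≤ √(a ^ 2 + b ^ 2) * ‖y‖ := by
  obtain ⟨he, heu, hu⟩ : ‖e‖ = 1 ∧ ⟪e, u⟫_ℂ = 0 ∧ ‖u‖ = 1 := by
    simpa [Fin.forall_fin_one] using hortho
  have hbessel := hortho.sum_inner_products_le y (s := Finset.univ)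
  simp only [Fin.sum_univ_two, Matrix.cons_val_zero, Matrix.cons_val_one] at hbessel
  rw [← Real.sqrt_sq (norm_nonneg y), ← Real.sqrt_mul (by positivity)]
  apply Real.le_sqrt_of_sq_le
  rw [@norm_add_sq ℂ, inner_smul_left, inner_smul_right, heu, mul_zero, mul_zero, map_zero,
    mul_zero, add_zero, norm_smul, norm_smul, he, hu, mul_one, mul_one,
    norm_sq_add_norm_sq_rotate]
  gcongr

end InnerProductSpace

section MatrixNorm

variable {n : Type*}

lemma isHermitian_vecMulVec_star_self (x : n → ℂ) : (vecMulVec x (star x)).IsHermitian := by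
  simp [IsHermitian, conjTranspose_vecMulVec]

lemma isHermitian_vecMulVec_star_add (x u : n → ℂ) :
    (vecMulVec x (star u) + vecMulVec u (star x)).IsHermitian := by
  simp [IsHermitian, conjTranspose_vecMulVec, add_comm]

variable [Fintype n]

lemma Matrix.IsHermitian.coe_re_star_dotProduct_mulVec_self {A : Matrix n n ℂ} (hA : A.IsHermitian)
    (x : n → ℂ) : ((star x ⬝ᵥ A *ᵥ x).re : ℂ) = star x ⬝ᵥ A *ᵥ x :=
  Complex.ext rfl (by simpa using (hA.im_star_dotProduct_mulVec_self x).symm)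

lemma vecMulVec_star_mulVec (x u y : n → ℂ) :
    vecMulVec x (star u) *ᵥ y = (star u ⬝ᵥ y) • x := by
  simp [vecMulVec_mulVec]

lemma vecNorm_eq_norm_toLp (y : n → ℂ) : vecNorm y = ‖toLp 2 y‖ := rfl

lemma vecNorm_nonneg (y : n → ℂ) : 0 ≤ vecNorm y := norm_nonneg _

lemma star_dotProduct_eq_inner (x y : n → ℂ) : star x ⬝ᵥ y = ⟪toLp 2 x, toLp 2 y⟫_ℂ := by
  rw [EuclideanSpace.inner_toLp_toLp, dotProduct_comm]

lemma star_dotProduct_self_eq_one_iff (x : n → ℂ) : star x ⬝ᵥ x = 1 ↔ vecNorm x = 1 := by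
  rw [star_dotProduct_eq_inner, inner_self_eq_norm_sq_to_K, vecNorm_eq_norm_toLp,
    ← RCLike.ofReal_pow, ← RCLike.ofReal_one, RCLike.ofReal_inj]
  exact pow_eq_one_iff_of_nonneg (norm_nonneg _) two_ne_zero

lemma vecNorm_smul (c : ℂ) (y : n → ℂ) : vecNorm (c • y) = ‖c‖ * vecNorm y := by
  simp [vecNorm_eq_norm_toLp, norm_smul]

lemma vecNorm_sub_smul_le {x : n → ℂ} (hx : star x ⬝ᵥ x = 1) (y : n → ℂ) :
    vecNorm (y - (star x ⬝ᵥ y) • x) ≤ vecNorm y := by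
  simpa [vecNorm_eq_norm_toLp, star_dotProduct_eq_inner] using
    norm_sub_inner_smul_le ((star_dotProduct_self_eq_one_iff x).mp hx) (toLp 2 y)

variable [DecidableEq n]

lemma specNorm_pos {M : Matrix n n ℂ} (hM : M ≠ 0) : 0 < specNorm M :=
  norm_pos_iff.mpr <| (map_ne_zero_iff _ toEuclideanCLM.injective).mpr hM

lemma specNorm_le_of_forall {M : Matrix n n ℂ} {K : ℝ} (hK : 0 ≤ K)
    (h : ∀ y, vecNorm (M *ᵥ y) ≤ K * vecNorm y) : specNorm M ≤ K :=
  ContinuousLinearMap.opNorm_le_bound _ hK fun y => h (ofLp y)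

lemma specNorm_smul_vecMulVec_star_self_le {x : n → ℂ} (hx : star x ⬝ᵥ x = 1) (a : ℝ) :
    specNorm ((a : ℂ) • vecMulVec x (star x)) ≤ |a| := by
  refine specNorm_le_of_forall (abs_nonneg a) fun y => ?_
  rw [smul_mulVec, vecMulVec_star_mulVec, smul_smul, vecNorm_eq_norm_toLp, vecNorm_eq_norm_toLp,
    toLp_smul, star_dotProduct_eq_inner]
  exact norm_smul_inner_smul_le ((star_dotProduct_self_eq_one_iff x).mp hx) a (toLp 2 y)

end MatrixNorm

section Perturbation

variable {n : Type*} [Fintype n] [DecidableEq n]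

lemma exists_isHermitian_mulVec_eq_of_orthonormal {x u : n → ℂ} (hx : star x ⬝ᵥ x = 1)
    (hu : star u ⬝ᵥ u = 1) (hxu : star x ⬝ᵥ u = 0) (a b : ℝ) :
    ∃ δ : Matrix n n ℂ, δ.IsHermitian ∧ δ *ᵥ x = (a : ℂ) • x + (b : ℂ) • u ∧
      specNorm δ ≤ √(a ^ 2 + b ^ 2) := by
  have hux : star u ⬝ᵥ x = 0 := by
    rw [star_dotProduct, hxu, star_zero]
  set δ : Matrix n n ℂ := (a : ℂ) • (vecMulVec x (star x) - vecMulVec u (star u))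
      + (b : ℂ) • (vecMulVec x (star u) + vecMulVec u (star x))
  have hmulVec : ∀ y, δ *ᵥ y = ((a : ℂ) * (star x ⬝ᵥ y) + b * (star u ⬝ᵥ y)) • x
        + ((b : ℂ) * (star x ⬝ᵥ y) - a * (star u ⬝ᵥ y)) • u := by
    intro y
    simp only [δ, add_mulVec, sub_mulVec, smul_mulVec, vecMulVec_star_mulVec]
    module
  refine ⟨δ, ?_, ?_, specNorm_le_of_forall (Real.sqrt_nonneg _) fun y => ?_⟩
  · exact (((isHermitian_vecMulVec_star_self x).sub (isHermitian_vecMulVec_star_self u)).smul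
      (Complex.conj_ofReal a)).add
      ((isHermitian_vecMulVec_star_add x u).smul (Complex.conj_ofReal b))
  · rw [hmulVec, hx, hux]
    module
  · have hortho : Orthonormal ℂ ![toLp 2 x, toLp 2 u] := by
      simp only [orthonormal_vecCons_iff, Fin.forall_fin_one, Matrix.cons_val_zero,
        ← vecNorm_eq_norm_toLp, ← star_dotProduct_eq_inner, ← star_dotProduct_self_eq_one_iff]
      exact ⟨hx, hxu, hu, fun i => i.elim0, Orthonormal.of_isEmpty _⟩
    rw [hmulVec]
    simpa [vecNorm_eq_norm_toLp, star_dotProduct_eq_inner] using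
      norm_reflection_le hortho a b (toLp 2 y)

lemma exists_isHermitian_mulVec_eq_smul_add {x w : n → ℂ} (hx : star x ⬝ᵥ x = 1)
    (hxw : star x ⬝ᵥ w = 0) (a : ℝ) :
    ∃ δ : Matrix n n ℂ, δ.IsHermitian ∧ δ *ᵥ x = (a : ℂ) • x + w ∧
      specNorm δ ≤ √(a ^ 2 + vecNorm w ^ 2) := by
  rcases eq_or_ne w 0 with rfl | hw
  · refine ⟨(a : ℂ) • vecMulVec x (star x),
      (isHermitian_vecMulVec_star_self x).smul (Complex.conj_ofReal a), ?_, ?_⟩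
    · rw [smul_mulVec, vecMulVec_star_mulVec, hx, one_smul, add_zero]
    · simpa [vecNorm_eq_norm_toLp, Real.sqrt_sq_eq_abs] using
        specNorm_smul_vecMulVec_star_self_le hx a
  · set b := vecNorm w
    have hb : b ≠ 0 := by simpa [b, vecNorm_eq_norm_toLp] using hw
    have hu : star (((b⁻¹ : ℝ) : ℂ) • w) ⬝ᵥ ((b⁻¹ : ℝ) : ℂ) • w = 1 := by
      rw [star_dotProduct_self_eq_one_iff, vecNorm_smul, Complex.norm_real, Real.norm_eq_abs,
        abs_inv, abs_of_nonneg (vecNorm_nonneg w), inv_mul_cancel₀ hb]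
    have hxu : star x ⬝ᵥ ((b⁻¹ : ℝ) : ℂ) • w = 0 := by rw [dotProduct_smul, hxw, smul_zero]
    obtain ⟨δ, hδ, hδx, hδnorm⟩ := exists_isHermitian_mulVec_eq_of_orthonormal hx hu hxu a b
    refine ⟨δ, hδ, ?_, hδnorm⟩
    rw [hδx, smul_smul, ← Complex.ofReal_mul, mul_inv_cancel₀ hb, Complex.ofReal_one, one_smul]

lemma sqrt_sq_add_sq_le_sqrt_two_mul {a b K : ℝ} (ha : |a| ≤ K) (hb : |b| ≤ K) :
    √(a ^ 2 + b ^ 2) ≤ √2 * K := by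
  have hK : 0 ≤ K := (abs_nonneg a).trans ha
  rw [← Real.sqrt_sq hK, ← Real.sqrt_mul zero_le_two]
  apply Real.sqrt_le_sqrt
  nlinarith [sq_abs a, sq_abs b, abs_nonneg a, abs_nonneg b]

theorem exists_isHermitian_perturbations {x r : n → ℂ} (hx : star x ⬝ᵥ x = 1) {μ α γ : ℝ}
    (hxr : star x ⬝ᵥ r = ((α - μ * γ : ℝ) : ℂ)) {KA KC η : ℝ} (hKA : 0 < KA) (hKC : 0 ≤ KC)
    (hα : |α| ≤ η * KA) (hγ : |γ| ≤ η * KC) (hr : vecNorm r ≤ η * (KA + |μ| * KC)) :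
    ∃ δA δC : Matrix n n ℂ, δA.IsHermitian ∧ δC.IsHermitian ∧
      δA *ᵥ x - (μ : ℂ) • δC *ᵥ x = -r ∧ star x ⬝ᵥ δC *ᵥ x = -(γ : ℂ) ∧
      specNorm δA ≤ √2 * η * KA ∧ specNorm δC ≤ √2 * η * KC := by
  set D := KA + |μ| * KC
  have hD : 0 < D := by positivity
  obtain ⟨c, hc, hc1⟩ : ∃ c : ℝ, μ * c = |μ| ∧ |c| ≤ 1 :=
    ⟨SignType.sign μ, self_mul_sign μ, by rcases lt_trichotomy μ 0 with h | h | h <;> simp [h]⟩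
  set rp := r - (star x ⬝ᵥ r) • x
  have hxrp : star x ⬝ᵥ rp = 0 := by simp [rp, dotProduct_sub, dotProduct_smul, hx]
  have hrp : vecNorm rp ≤ vecNorm r := vecNorm_sub_smul_le hx r
  have hscaled {K s : ℝ} (hK : 0 ≤ K) (hs : |s| ≤ K / D) : vecNorm ((s : ℂ) • rp) ≤ η * K := by
    rw [vecNorm_smul, Complex.norm_real, Real.norm_eq_abs]
    calc |s| * vecNorm rp ≤ K / D * (η * D) :=
          mul_le_mul hs (hrp.trans hr) (vecNorm_nonneg rp) (by positivity)
      _ = η * K := by field_simp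
  obtain ⟨δA, hδA, hδAx, hδAnorm⟩ := exists_isHermitian_mulVec_eq_smul_add hx
    (w := ((-(KA / D) : ℝ) : ℂ) • rp) (by rw [dotProduct_smul, hxrp, smul_zero]) (-α)
  obtain ⟨δC, hδC, hδCx, hδCnorm⟩ := exists_isHermitian_mulVec_eq_smul_add hx
    (w := ((c * (KC / D) : ℝ) : ℂ) • rp) (by rw [dotProduct_smul, hxrp, smul_zero]) (-γ)
  refine ⟨δA, δC, hδA, hδC, ?_, ?_, ?_, ?_⟩
  · have hsplit : r = rp + ((α - μ * γ : ℝ) : ℂ) • x := by rw [← hxr, sub_add_cancel]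
    have hshare : KA / D + μ * (c * (KC / D)) = 1 := by
      rw [← mul_assoc, hc, mul_div_assoc', ← add_div, div_self hD.ne']
    rw [hδAx, hδCx, hsplit]
    clear_value rp
    match_scalars
    · ring
    · linear_combination -(by exact_mod_cast hshare : (KA : ℂ) / D + μ * (c * (KC / D)) = 1)
  · rw [hδCx, dotProduct_add, dotProduct_smul, dotProduct_smul, hx, hxrp]
    simp
  · refine hδAnorm.trans ?_
    rw [mul_assoc]
    refine sqrt_sq_add_sq_le_sqrt_two_mul (by rwa [abs_neg]) ?_
    rw [abs_of_nonneg (vecNorm_nonneg _)]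
    exact hscaled hKA.le (by rw [abs_neg, abs_of_pos (by positivity)])
  · refine hδCnorm.trans ?_
    rw [mul_assoc]
    refine sqrt_sq_add_sq_le_sqrt_two_mul (by rwa [abs_neg]) ?_
    rw [abs_of_nonneg (vecNorm_nonneg _)]
    refine hscaled hKC ?_
    rw [abs_mul, abs_of_nonneg (by positivity : 0 ≤ KC / D)]
    exact mul_le_of_le_one_left (by positivity) hc1

end Perturbation

theorem stmt2_general {n : Type*} [Fintype n] [DecidableEq n]
    (A C : Matrix n n ℂ) (hA : A.IsHermitian) (hC : C.IsHermitian)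
    (hA0 : A ≠ 0) (hC0 : C ≠ 0)
    (μ lam : ℝ) (x : n → ℂ) (hx : star x ⬝ᵥ x = 1)
    (r : n → ℂ) (hr : r = (A - (μ : ℂ) • C - (lam : ℂ) • 1).mulVec x)
    (η₁ : ℝ)
    (hη₁ : η₁ = max (max
        (‖star x ⬝ᵥ A.mulVec x - (lam : ℂ)‖ / specNorm A)
        (‖star x ⬝ᵥ C.mulVec x‖ / specNorm C))
      (vecNorm r / (specNorm A + |μ| * specNorm C))) :
    ∃ δA δC : Matrix n n ℂ, δA.IsHermitian ∧ δC.IsHermitian ∧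
      δA.mulVec x - (μ : ℂ) • δC.mulVec x = -r ∧
      star x ⬝ᵥ δC.mulVec x = -(star x ⬝ᵥ C.mulVec x) ∧
      specNorm δA ≤ Real.sqrt 2 * η₁ * specNorm A ∧
      specNorm δC ≤ Real.sqrt 2 * η₁ * specNorm C := by
  set α := (star x ⬝ᵥ A *ᵥ x).re - lam
  set γ := (star x ⬝ᵥ C *ᵥ x).re
  have hAx : star x ⬝ᵥ A *ᵥ x - lam = (α : ℂ) := by
    rw [Complex.ofReal_sub, hA.coe_re_star_dotProduct_mulVec_self]
  have hCx : star x ⬝ᵥ C *ᵥ x = (γ : ℂ) := (hC.coe_re_star_dotProduct_mulVec_self x).symm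
  have hxr : star x ⬝ᵥ r = ((α - μ * γ : ℝ) : ℂ) := by
    rw [hr, sub_mulVec, sub_mulVec, smul_mulVec, smul_mulVec, one_mulVec, dotProduct_sub,
      dotProduct_sub, dotProduct_smul, dotProduct_smul, hx, hCx, smul_eq_mul, smul_eq_mul]
    push_cast
    linear_combination hAx
  have hSA := specNorm_pos hA0
  have hSC := specNorm_pos hC0
  have hαη : |α| ≤ η₁ * specNorm A := by
    rw [← div_le_iff₀ hSA, ← Real.norm_eq_abs, ← Complex.norm_real, ← hAx, hη₁]
    exact le_max_of_le_left (le_max_left _ _)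
  have hγη : |γ| ≤ η₁ * specNorm C := by
    rw [← div_le_iff₀ hSC, ← Real.norm_eq_abs, ← Complex.norm_real, ← hCx, hη₁]
    exact le_max_of_le_left (le_max_right _ _)
  have hrη : vecNorm r ≤ η₁ * (specNorm A + |μ| * specNorm C) := by
    rw [← div_le_iff₀ (by positivity), hη₁]
    exact le_max_right _ _
  obtain ⟨δA, δC, hδA, hδC, hδx, hδCx, hδAnorm, hδCnorm⟩ :=
    exists_isHermitian_perturbations hx hxr hSA hSC.le hαη hγη hrη
  exact ⟨δA, δC, hδA, hδC, hδx, by rw [hδCx, hCx], hδAnorm, hδCnorm⟩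

/-- construction of Hermitian perturbations `δA, δC`
satisfying `δA x̂ - μ̂ δC x̂ = -r`, `x̂ᴴ δC x̂ = -γ_C`, with norm bounds
`‖δA‖ ≤ √2 η₁ ‖A‖` and `‖δC‖ ≤ √2 η₁ ‖C‖`. -/
theorem stmt2 {n : Type*} [Fintype n] [DecidableEq n]
    (A C : Matrix n n ℂ) (hA : A.IsHermitian) (hC : C.IsHermitian)
    (hA0 : A ≠ 0) (hC0 : C ≠ 0)
    (μ lam : ℝ) (hμ : μ ≠ 0) (x : n → ℂ) (hx : star x ⬝ᵥ x = 1)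
    (r : n → ℂ) (hr : r = (A - (μ : ℂ) • C - (lam : ℂ) • 1).mulVec x)
    (η₁ : ℝ)
    (hη₁ : η₁ = max (max
        (‖star x ⬝ᵥ A.mulVec x - (lam : ℂ)‖ / specNorm A)
        (‖star x ⬝ᵥ C.mulVec x‖ / specNorm C))
      (vecNorm r / (specNorm A + |μ| * specNorm C))) :
    ∃ δA δC : Matrix n n ℂ, δA.IsHermitian ∧ δC.IsHermitian ∧
      δA.mulVec x - (μ : ℂ) • δC.mulVec x = -r ∧
      star x ⬝ᵥ δC.mulVec x = -(star x ⬝ᵥ C.mulVec x) ∧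
      specNorm δA ≤ Real.sqrt 2 * η₁ * specNorm A ∧
      specNorm δC ≤ Real.sqrt 2 * η₁ * specNorm C :=
  stmt2_general A C hA hC hA0 hC0 μ lam x hx r hr η₁ hη₁
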